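/- For real numbers α_0,...,α_{t-1} with 0 ≤ α_τ ≤ min{1, 1/μ} for a fixed μ > 0, the product S = ∏_{τ=0}^{t-1}(1 - α_τ μ) satisfies 0 ≤ S ≤ 1, and with η = ∑_{τ=0}^{t-1} α_τ, one has (1/2)·min{1, η μ} ≤ 1 - S ≤ min{1, η μ}. -/

import Mathlib

/-!
With `x τ = α τ μ ∈ [0, 1]` and `s = ∑ x τ = η μ`, the upper bound `1 - ∏ (1 - x τ) ≤ s` is the
Weierstrass product inequality. For the lower bound, `1 - x ≤ exp (-x)` gives
`∏ (1 - x τ) ≤ exp (-s) ≤ 1 / (1 + s)`, and `s / (1 + s) ≥ min 1 s / 2`.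
-/

open Finset Real

theorem Finset.one_sub_prod_one_sub_le_sum {ι : Type*} (s : Finset ι) {x : ι → ℝ}
    (hx₀ : ∀ i ∈ s, 0 ≤ x i) (hx₁ : ∀ i ∈ s, x i ≤ 1) :
    1 - ∏ i ∈ s, (1 - x i) ≤ ∑ i ∈ s, x i := by
  induction s using Finset.cons_induction with
  | empty => simp
  | cons a s ha ih =>
    simp only [mem_cons, forall_eq_or_imp] at hx₀ hx₁
    have hprod : ∏ i ∈ s, (1 - x i) ≤ 1 :=
      prod_le_one (fun i hi ↦ sub_nonneg.2 (hx₁.2 i hi)) fun i hi ↦ sub_le_self _ (hx₀.2 i hi)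
    have hterm : x a * ∏ i ∈ s, (1 - x i) ≤ x a := mul_le_of_le_one_right hx₀.1 hprod
    rw [prod_cons, sum_cons]
    linarith [ih hx₀.2 hx₁.2]

theorem Finset.prod_one_sub_le_exp_neg_sum {ι : Type*} (s : Finset ι) {x : ι → ℝ}
    (hx₁ : ∀ i ∈ s, x i ≤ 1) : ∏ i ∈ s, (1 - x i) ≤ exp (-∑ i ∈ s, x i) := by
  rw [← sum_neg_distrib, exp_sum]
  exact prod_le_prod (fun i hi ↦ sub_nonneg.2 (hx₁ i hi)) fun i _ ↦ one_sub_le_exp_neg (x i)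

theorem Real.half_min_one_le_one_sub_exp_neg {s : ℝ} (hs : 0 ≤ s) :
    1 / 2 * min 1 s ≤ 1 - exp (-s) := by
  have hpos : 0 < 1 + s := by linarith
  have hexp : exp (-s) ≤ 1 / (1 + s) := by
    rw [exp_neg, inv_eq_one_div]
    exact one_div_le_one_div_of_le hpos (by linarith [add_one_le_exp s])
  have hfrac : 1 / 2 * min 1 s ≤ 1 - 1 / (1 + s) := by
    rw [one_sub_div hpos.ne', add_sub_cancel_left, le_div_iff₀ hpos]
    rcases le_total s 1 with h | h
    · rw [min_eq_right h]; nlinarith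
    · rw [min_eq_left h]; linarith
  linarith

theorem stmt_0 (t : ℕ) (μ : ℝ) (hμ : 0 < μ) (α : Fin t → ℝ)
    (hα : ∀ τ, 0 ≤ α τ ∧ α τ ≤ min 1 (1 / μ)) :
    0 ≤ ∏ τ, (1 - α τ * μ) ∧ (∏ τ, (1 - α τ * μ)) ≤ 1 ∧
      (1 / 2) * min 1 ((∑ τ, α τ) * μ) ≤ 1 - ∏ τ, (1 - α τ * μ) ∧
      1 - ∏ τ, (1 - α τ * μ) ≤ min 1 ((∑ τ, α τ) * μ) := by
  have hx₀ : ∀ τ ∈ univ, 0 ≤ α τ * μ := fun τ _ ↦ mul_nonneg (hα τ).1 hμ.le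
  have hx₁ : ∀ τ ∈ univ, α τ * μ ≤ 1 := fun τ _ ↦
    (le_div_iff₀ hμ).1 (by simpa only [one_div] using ((hα τ).2.trans (min_le_right _ _)))
  have hnonneg : 0 ≤ ∏ τ, (1 - α τ * μ) := prod_nonneg fun τ hτ ↦ sub_nonneg.2 (hx₁ τ hτ)
  rw [sum_mul]
  refine ⟨hnonneg, prod_le_one (fun τ hτ ↦ sub_nonneg.2 (hx₁ τ hτ))
    (fun τ hτ ↦ sub_le_self _ (hx₀ τ hτ)), ?_, ?_⟩
  · calc 1 / 2 * min 1 (∑ τ, α τ * μ) ≤ 1 - exp (-∑ τ, α τ * μ) :=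
          half_min_one_le_one_sub_exp_neg (sum_nonneg hx₀)
      _ ≤ 1 - ∏ τ, (1 - α τ * μ) := sub_le_sub_left (prod_one_sub_le_exp_neg_sum _ hx₁) 1
  · exact le_min (by linarith) (one_sub_prod_one_sub_le_sum _ hx₀ hx₁)
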